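/- arXiv:cs/0505005 — 2 statements merged into one kernel-verified Lean document; each statement's English description precedes it below -/
import Mathlib

section
/- Let d ≥ 1, let V be a finite set of d-dimensional boxes with widths w_i(v) > 0, and let h_1, …, h_d be container sizes. Suppose G_1 = (V, E_1), …, G_d = (V, E_d) is a packing class, i.e.: each G_i is an interval graph; for every independent set S of G_i one has ∑_{v ∈ S} w_i(v) ≤ h_i; and E_1 ∩ … ∩ E_d = ∅. Then there exists a feasible orthogonal packing of the boxes V into the container of sizes h_1, …, h_d. -/
/-- A feasible orthogonal packing of `d`-dimensional boxes with widths `w i v` into a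
container of sizes `h i`. -/
def IsFeasiblePacking {d : ℕ} {V : Type*} (w : Fin d → V → ℝ) (h : Fin d → ℝ)
    (x : Fin d → V → ℝ) : Prop :=
  (∀ i v, 0 ≤ x i v ∧ x i v + w i v ≤ h i) ∧
  ∀ u v : V, u ≠ v →
    Disjoint {p : Fin d → ℝ | ∀ i, p i ∈ Set.Ioo (x i u) (x i u + w i u)}
             {p : Fin d → ℝ | ∀ i, p i ∈ Set.Ioo (x i v) (x i v + w i v)}

/-- A simple graph is an interval graph if its vertices can be represented by nonempty
real intervals so that distinct vertices are adjacent iff their intervals intersect. -/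
def IsIntervalGraph {V : Type*} (G : SimpleGraph V) : Prop :=
  ∃ I : V → Set ℝ, (∀ v, (I v).Nonempty) ∧ (∀ v, (I v).OrdConnected) ∧
    ∀ u v : V, u ≠ v → (G.Adj u v ↔ (I u ∩ I v).Nonempty)

/-!
In each direction `i` the intervals representing `G i` induce an interval order: `u < v` iff
the interval of `u` lies entirely to the left of that of `v`. Two distinct vertices are
comparable exactly when they are non-adjacent, so chains are independent sets and, by C2, every
chain has total width at most `h i`. Placing each box at the largest total width of a chain
strictly below it gives coordinates in `[0, h i - w i v]` that separate every non-adjacent pair.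
By C3 any two boxes are non-adjacent in some direction, hence separated there.
-/

open Set

theorem Set.OrdConnected.forall_lt_or_forall_lt_of_disjoint {α : Type*} [LinearOrder α]
    {s t : Set α} (hs : s.OrdConnected) (ht : t.OrdConnected) (hst : Disjoint s t) :
    (∀ a ∈ s, ∀ b ∈ t, a < b) ∨ ∀ b ∈ t, ∀ a ∈ s, b < a := by
  by_contra! ⟨⟨a, ha, b, hb, hba⟩, ⟨b', hb', a', ha', ha'b'⟩⟩
  rcases le_or_gt b a' with hba' | ha'b
  · exact disjoint_left.1 hst ha' (ht.out hb hb' ⟨hba', ha'b'⟩)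
  · exact disjoint_left.1 hst (hs.out ha' ha ⟨ha'b.le, hba⟩) hb

section ChainHeight

variable {V : Type*} (r : V → V → Prop) (w : V → ℝ)

def chainsBelow (v : V) : Set (Finset V) :=
  {S | IsChain r (S : Set V) ∧ ∀ a ∈ S, r a v}

noncomputable def chainHeight (v : V) : ℝ :=
  sSup ((fun S => ∑ a ∈ S, w a) '' chainsBelow r v)

variable {r w}

theorem empty_mem_chainsBelow (v : V) : ∅ ∈ chainsBelow r v := by
  simp [chainsBelow]

theorem notMem_of_mem_chainsBelow [Std.Irrefl r] {S : Finset V} {v : V}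
    (hS : S ∈ chainsBelow r v) : v ∉ S :=
  fun hv => irrefl v (hS.2 v hv)

theorem isChain_insert_of_mem_chainsBelow [DecidableEq V] {S : Finset V} {v : V}
    (hS : S ∈ chainsBelow r v) : IsChain r (insert v S : Finset V) := by
  rw [Finset.coe_insert]
  exact hS.1.insert fun a ha _ => Or.inr (hS.2 a ha)

theorem insert_mem_chainsBelow [DecidableEq V] [IsTrans V r] {S : Finset V} {u v : V}
    (hS : S ∈ chainsBelow r u) (huv : r u v) : insert u S ∈ chainsBelow r v := by
  refine ⟨isChain_insert_of_mem_chainsBelow hS, ?_⟩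
  simp only [Finset.mem_insert, forall_eq_or_imp]
  exact ⟨huv, fun a ha => _root_.trans (hS.2 a ha) huv⟩

variable [IsStrictOrder V r] {h : ℝ}

theorem sum_add_le_of_mem_chainsBelow
    (hchain : ∀ S : Finset V, IsChain r (S : Set V) → ∑ a ∈ S, w a ≤ h)
    {S : Finset V} {v : V} (hS : S ∈ chainsBelow r v) : ∑ a ∈ S, w a + w v ≤ h := by
  classical
  have := hchain _ (isChain_insert_of_mem_chainsBelow hS)
  rwa [Finset.sum_insert (notMem_of_mem_chainsBelow hS), add_comm] at this

theorem le_chainHeight (hchain : ∀ S : Finset V, IsChain r (S : Set V) → ∑ a ∈ S, w a ≤ h)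
    {S : Finset V} {v : V} (hS : S ∈ chainsBelow r v) : ∑ a ∈ S, w a ≤ chainHeight r w v := by
  refine le_csSup ⟨h - w v, ?_⟩ (mem_image_of_mem _ hS)
  rintro _ ⟨T, hT, rfl⟩
  linarith [sum_add_le_of_mem_chainsBelow hchain hT]

theorem chainHeight_nonneg
    (hchain : ∀ S : Finset V, IsChain r (S : Set V) → ∑ a ∈ S, w a ≤ h) (v : V) :
    0 ≤ chainHeight r w v := by
  simpa using le_chainHeight hchain (empty_mem_chainsBelow v)

theorem chainHeight_add_le
    (hchain : ∀ S : Finset V, IsChain r (S : Set V) → ∑ a ∈ S, w a ≤ h) (v : V) :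
    chainHeight r w v + w v ≤ h := by
  suffices chainHeight r w v ≤ h - w v by linarith
  refine csSup_le ⟨_, mem_image_of_mem _ (empty_mem_chainsBelow v)⟩ ?_
  rintro _ ⟨S, hS, rfl⟩
  linarith [sum_add_le_of_mem_chainsBelow hchain hS]

theorem chainHeight_add_le_of_rel
    (hchain : ∀ S : Finset V, IsChain r (S : Set V) → ∑ a ∈ S, w a ≤ h) {u v : V}
    (huv : r u v) : chainHeight r w u + w u ≤ chainHeight r w v := by
  classical
  suffices chainHeight r w u ≤ chainHeight r w v - w u by linarith
  refine csSup_le ⟨_, mem_image_of_mem _ (empty_mem_chainsBelow u)⟩ ?_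
  rintro _ ⟨S, hS, rfl⟩
  have := le_chainHeight hchain (insert_mem_chainsBelow hS huv)
  rw [Finset.sum_insert (notMem_of_mem_chainsBelow hS)] at this
  linarith

end ChainHeight

section IntervalGraph

variable {V : Type*} {G : SimpleGraph V}

theorem IsIntervalGraph.exists_isStrictOrder (hG : IsIntervalGraph G) :
    ∃ r : V → V → Prop, IsStrictOrder V r ∧ (∀ u v, r u v → ¬ G.Adj u v) ∧
      ∀ u v, u ≠ v → ¬ G.Adj u v → r u v ∨ r v u := by
  obtain ⟨I, hne, hconn, hadj⟩ := hG
  let r u v := ∀ a ∈ I u, ∀ b ∈ I v, a < b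
  have hirr (v : V) : ¬ r v v := fun hv =>
    have ⟨a, ha⟩ := hne v
    lt_irrefl a (hv a ha a ha)
  refine ⟨r, { irrefl := hirr, trans := fun u v t huv hvt a ha c hc => ?_ },
    fun u v huv hG => ?_, ?_⟩
  · obtain ⟨b, hb⟩ := hne v
    exact (huv a ha b hb).trans (hvt b hb c hc)
  · obtain ⟨c, hcu, hcv⟩ := (hadj u v fun h => hirr u (h ▸ huv)).1 hG
    exact lt_irrefl c (huv c hcu c hcv)
  · intro u v huv hG
    refine (hconn u).forall_lt_or_forall_lt_of_disjoint (hconn v) ?_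
    rw [disjoint_iff_inter_eq_empty, ← not_nonempty_iff_eq_empty]
    exact fun hI => hG ((hadj u v huv).2 hI)

theorem IsIntervalGraph.exists_separating_coords (hG : IsIntervalGraph G) (w : V → ℝ) (h : ℝ)
    (hindep : ∀ S : Finset V, G.IsIndepSet S → ∑ v ∈ S, w v ≤ h) :
    ∃ x : V → ℝ, (∀ v, 0 ≤ x v ∧ x v + w v ≤ h) ∧
      ∀ u v, u ≠ v → ¬ G.Adj u v → x u + w u ≤ x v ∨ x v + w v ≤ x u := by
  obtain ⟨r, hr, hrG, hGr⟩ := hG.exists_isStrictOrder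
  have hchain (S : Finset V) (hS : IsChain r (S : Set V)) : ∑ a ∈ S, w a ≤ h :=
    hindep S fun a ha b hb hab hG => (hS ha hb hab).elim (hrG a b · hG) (hrG b a · hG.symm)
  exact ⟨chainHeight r w, fun v => ⟨chainHeight_nonneg hchain v, chainHeight_add_le hchain v⟩,
    fun u v huv hG =>
      (hGr u v huv hG).imp (chainHeight_add_le_of_rel hchain) (chainHeight_add_le_of_rel hchain)⟩

end IntervalGraph

theorem disjoint_setOf_forall_mem_Ioo_of_le {ι : Type*} {a b c e : ι → ℝ} (i : ι)
    (hbc : b i ≤ c i) :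
    Disjoint {p : ι → ℝ | ∀ j, p j ∈ Ioo (a j) (b j)} {p | ∀ j, p j ∈ Ioo (c j) (e j)} :=
  disjoint_left.2 fun _ hp hq => (hp i).2.not_ge (hbc.trans (hq i).1.le)

theorem packing_class_gives_feasible_packing_general
    {d : ℕ} {V : Type*}
    (w : Fin d → V → ℝ) (h : Fin d → ℝ)
    (G : Fin d → SimpleGraph V)
    (hC1 : ∀ i, IsIntervalGraph (G i))
    (hC2 : ∀ i : Fin d, ∀ S : Finset V,
      (∀ u ∈ S, ∀ v ∈ S, u ≠ v → ¬ (G i).Adj u v) → ∑ v ∈ S, w i v ≤ h i)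
    (hC3 : (⋂ i, (G i).edgeSet) = ∅) :
    ∃ x : Fin d → V → ℝ, IsFeasiblePacking w h x := by
  choose x hx_mem hx_sep using fun i =>
    (hC1 i).exists_separating_coords (w i) (h i) fun S hS => hC2 i S fun u hu v hv => hS hu hv
  refine ⟨x, hx_mem, fun u v huv => ?_⟩
  obtain ⟨i, hi⟩ : ∃ i, ¬ (G i).Adj u v := by
    have : s(u, v) ∉ ⋂ i, (G i).edgeSet := hC3 ▸ notMem_empty _
    simpa using this
  rcases hx_sep i u v huv hi with hle | hle
  · exact disjoint_setOf_forall_mem_Ioo_of_le i hle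
  · exact (disjoint_setOf_forall_mem_Ioo_of_le i hle).symm

/-- Sufficiency direction of the theorem of Fekete and Schepers: any packing class
(a `d`-tuple of graphs satisfying C1, C2, C3) gives rise to a feasible packing. -/
theorem packing_class_gives_feasible_packing
    {d : ℕ} (hd : 1 ≤ d) {V : Type*} [Fintype V]
    (w : Fin d → V → ℝ) (hw : ∀ i v, 0 < w i v) (h : Fin d → ℝ)
    (G : Fin d → SimpleGraph V)
    (hC1 : ∀ i, IsIntervalGraph (G i))
    (hC2 : ∀ i : Fin d, ∀ S : Finset V,
      (∀ u ∈ S, ∀ v ∈ S, u ≠ v → ¬ (G i).Adj u v) → ∑ v ∈ S, w i v ≤ h i)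
    (hC3 : (⋂ i, (G i).edgeSet) = ∅) :
    ∃ x : Fin d → V → ℝ, IsFeasiblePacking w h x :=
  packing_class_gives_feasible_packing_general w h G hC1 hC2 hC3
end

section
/- A finite simple graph G is an interval graph if and only if its complement admits a transitive orientation and G contains no induced chordless cycle of length 4. -/
/-- A graph `H` admits a transitive orientation if each edge can be assigned a
direction so that the resulting relation is transitive. -/
def HasTransitiveOrientation {V : Type*} (H : SimpleGraph V) : Prop :=
  ∃ r : V → V → Prop,
    (∀ u v : V, H.Adj u v ↔ (r u v ∨ r v u)) ∧
    (∀ u v : V, r u v → ¬ r v u) ∧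
    Transitive r

/-- `G` contains an induced chordless cycle of length 4: four vertices `a b c d` with
`ab, bc, cd, da` edges and `ac, bd` non-edges. -/
def HasInducedC4 {V : Type*} (G : SimpleGraph V) : Prop :=
  ∃ a b c d : V, a ≠ c ∧ b ≠ d ∧
    G.Adj a b ∧ G.Adj b c ∧ G.Adj c d ∧ G.Adj d a ∧ ¬ G.Adj a c ∧ ¬ G.Adj b d


/-!
Orienting each non-edge `uv` of an interval graph from `u` to `v` when the interval of `u` lies
to the left of that of `v` gives a transitive orientation of `Gᶜ`, and this order is `2 + 2`-free
(`a < b` and `c < d` force `a < d` or `c < b`). For any transitive orientation of `Gᶜ`, a copy of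
`2 + 2` is exactly an induced `C₄` of `G`. Conversely (Fishburn), the predecessor sets of a
`2 + 2`-free irreflexive relation form a chain, so their sizes rank them, and the vertex `v`
gets the interval from the number of its predecessors up to (excluding) that of any successor.
-/

section

variable {V : Type*} {r : V → V → Prop}

def TwoPlusTwoFree (r : V → V → Prop) : Prop :=
  ∀ a b c d, r a b → r c d → r a d ∨ r c b

namespace TwoPlusTwoFree

theorem trans (h : TwoPlusTwoFree r) (hirr : ∀ v, ¬ r v v) ⦃a b c : V⦄ (hab : r a b)
    (hbc : r b c) : r a c :=
  (h a b b c hab hbc).resolve_right (hirr b)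

theorem ncard_setOf_lt [Finite V] (h : TwoPlusTwoFree r) {u v w : V} (huw : r u w)
    (huv : ¬ r u v) : {x | r x v}.ncard < {x | r x w}.ncard := by
  have hsub : {x | r x v} ⊆ {x | r x w} := fun x hxv =>
    (h x v u w hxv huw).resolve_right huv
  exact Set.ncard_lt_ncard (hsub.ssubset_of_not_subset fun hws => huv (hws huw))

end TwoPlusTwoFree

def fishburnInterval (r : V → V → Prop) (v : V) : Set ℝ :=
  {x | ({u | r u v}.ncard : ℝ) ≤ x ∧ ∀ w, r v w → x < {u | r u w}.ncard}

theorem ordConnected_fishburnInterval (v : V) : (fishburnInterval r v).OrdConnected :=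
  ⟨fun _ hx _ hy _ hz => ⟨hx.1.trans hz.1, fun w hvw => hz.2.trans_lt (hy.2 w hvw)⟩⟩

theorem ncard_mem_fishburnInterval [Finite V] (h : TwoPlusTwoFree r) {u v : V}
    (hle : {x | r x u}.ncard ≤ {x | r x v}.ncard) (huv : ¬ r u v) :
    ({x | r x v}.ncard : ℝ) ∈ fishburnInterval r u :=
  ⟨by exact_mod_cast hle, fun _ huw => by exact_mod_cast h.ncard_setOf_lt huw huv⟩

theorem fishburnInterval_inter_nonempty_iff [Finite V] (h : TwoPlusTwoFree r)
    (hirr : ∀ v, ¬ r v v) {u v : V} :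
    (fishburnInterval r u ∩ fishburnInterval r v).Nonempty ↔ ¬ r u v ∧ ¬ r v u := by
  constructor
  · rintro ⟨x, hxu, hxv⟩
    exact ⟨fun huv => (hxu.2 v huv).not_ge hxv.1, fun hvu => (hxv.2 u hvu).not_ge hxu.1⟩
  · rintro ⟨huv, hvu⟩
    rcases le_total {x | r x u}.ncard {x | r x v}.ncard with hle | hle
    · exact ⟨_, ncard_mem_fishburnInterval h hle huv,
        ncard_mem_fishburnInterval h le_rfl (hirr v)⟩
    · exact ⟨_, ncard_mem_fishburnInterval h le_rfl (hirr u),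
        ncard_mem_fishburnInterval h hle hvu⟩

section IntervalFamily

variable {α : Type*} [LinearOrder α]

theorem Set.OrdConnected.disjoint_iff_forall_lt {s t : Set α} (hs : s.OrdConnected)
    (ht : t.OrdConnected) :
    Disjoint s t ↔ (∀ x ∈ s, ∀ y ∈ t, x < y) ∨ (∀ x ∈ t, ∀ y ∈ s, x < y) := by
  constructor
  · intro hst
    by_contra! h
    obtain ⟨⟨x, hx, y, hy, hyx⟩, ⟨y', hy', x', hx', hx'y'⟩⟩ := h
    rcases le_total x' y with hx'y | hyx'
    · exact Set.disjoint_left.1 hst (hs.out hx' hx ⟨hx'y, hyx⟩) hy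
    · exact Set.disjoint_left.1 hst hx' (ht.out hy hy' ⟨hyx', hx'y'⟩)
  · rintro (h | h) <;> refine Set.disjoint_left.2 fun x hxs hxt => ?_
    exacts [(h x hxs x hxt).false, (h x hxt x hxs).false]

def intervalOrderOf (I : V → Set α) (u v : V) : Prop :=
  ∀ x ∈ I u, ∀ y ∈ I v, x < y

theorem twoPlusTwoFree_intervalOrderOf (I : V → Set α) : TwoPlusTwoFree (intervalOrderOf I) := by
  intro a b c d hab hcd
  unfold intervalOrderOf at *
  by_contra! h
  obtain ⟨⟨x, hx, y, hy, hyx⟩, ⟨z, hz, w, hw, hwz⟩⟩ := h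
  exact (((hab x hx w hw).trans_le hwz).trans ((hcd z hz y hy).trans_le hyx)).false

theorem not_intervalOrderOf_self {I : V → Set α} (hne : ∀ v, (I v).Nonempty) (v : V) :
    ¬ intervalOrderOf I v v := fun hv =>
  have ⟨x, hx⟩ := hne v
  (hv x hx x hx).false

end IntervalFamily

namespace SimpleGraph

structure IsTransitiveOrientation (H : SimpleGraph V) (r : V → V → Prop) : Prop where
  adj_iff : ∀ u v, H.Adj u v ↔ r u v ∨ r v u
  asymm : ∀ u v, r u v → ¬ r v u
  trans : ∀ ⦃a b c⦄, r a b → r b c → r a c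

namespace IsTransitiveOrientation

variable {G : SimpleGraph V}

theorem adj_iff_not_rel (hr : Gᶜ.IsTransitiveOrientation r) {u v : V} :
    G.Adj u v ↔ u ≠ v ∧ ¬ r u v ∧ ¬ r v u := by
  have := hr.adj_iff u v
  rw [compl_adj] at this
  by_cases huv : u = v
  · subst huv
    simp only [G.irrefl, ne_eq, not_true_eq_false, false_and]
  · tauto

theorem irrefl (hr : Gᶜ.IsTransitiveOrientation r) (v : V) : ¬ r v v :=
  fun hv => hr.asymm v v hv hv

theorem not_adj_of_rel (hr : Gᶜ.IsTransitiveOrientation r) {u v : V} (huv : r u v) :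
    ¬ G.Adj u v :=
  fun hadj => (hr.adj_iff_not_rel.1 hadj).2.1 huv

theorem twoPlusTwoFree_iff_not_hasInducedC4 (hr : Gᶜ.IsTransitiveOrientation r) :
    TwoPlusTwoFree r ↔ ¬ HasInducedC4 G := by
  constructor
  · rintro h ⟨a, b, c, d, hac, hbd, hab, hbc, hcd, hda, hnac, hnbd⟩
    have hrac := (hr.adj_iff a c).1 ((G.compl_adj a c).2 ⟨hac, hnac⟩)
    have hrbd := (hr.adj_iff b d).1 ((G.compl_adj b d).2 ⟨hbd, hnbd⟩)
    rcases hrac with hrac | hrca <;> rcases hrbd with hrbd | hrdb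
    · exact (h a c b d hrac hrbd).elim (hr.not_adj_of_rel · hda.symm) (hr.not_adj_of_rel · hbc)
    · exact (h a c d b hrac hrdb).elim (hr.not_adj_of_rel · hab) (hr.not_adj_of_rel · hcd.symm)
    · exact (h c a b d hrca hrbd).elim (hr.not_adj_of_rel · hcd) (hr.not_adj_of_rel · hab.symm)
    · exact (h c a d b hrca hrdb).elim (hr.not_adj_of_rel · hbc.symm) (hr.not_adj_of_rel · hda)
  · intro hC4 a b c d hab hcd
    by_contra! h
    -- `a < b` and `c < d` with the cross pairs incomparable is the induced cycle `a c b d`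
    refine hC4 ⟨a, c, b, d, ?_, ?_, ?_, ?_, ?_, ?_, hr.not_adj_of_rel hab, hr.not_adj_of_rel hcd⟩
      <;> simp only [hr.adj_iff_not_rel, ne_eq] <;> grind [hr.trans, hr.irrefl]

end IsTransitiveOrientation

theorem isTransitiveOrientation_intervalOrderOf {α : Type*} [LinearOrder α] {G : SimpleGraph V}
    {I : V → Set α} (hne : ∀ v, (I v).Nonempty) (hI : ∀ v, (I v).OrdConnected)
    (hadj : ∀ u v, u ≠ v → (G.Adj u v ↔ (I u ∩ I v).Nonempty)) :
    Gᶜ.IsTransitiveOrientation (intervalOrderOf I) := by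
  have hirr := not_intervalOrderOf_self hne
  have htr := (twoPlusTwoFree_intervalOrderOf I).trans hirr
  refine ⟨fun u v => ?_, fun u v huv hvu => hirr u (htr huv hvu), htr⟩
  by_cases huv : u = v
  · subst huv
    simp [hirr u]
  · rw [compl_adj, hadj u v huv, Set.not_nonempty_iff_eq_empty, ← Set.disjoint_iff_inter_eq_empty,
      (hI u).disjoint_iff_forall_lt (hI v)]
    exact and_iff_right huv

end SimpleGraph

end

/-- Gilmore–Hoffman / Ghouila-Houri characterization: a finite simple graph is an
interval graph iff its complement admits a transitive orientation and the graph
contains no induced chordless cycle of length 4. -/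
theorem intervalGraph_iff_complement_transitively_orientable_and_C4_free
    {V : Type*} [Fintype V] (G : SimpleGraph V) :
    IsIntervalGraph G ↔ HasTransitiveOrientation Gᶜ ∧ ¬ HasInducedC4 G := by
  constructor
  · rintro ⟨I, hne, hI, hadj⟩
    have hr := SimpleGraph.isTransitiveOrientation_intervalOrderOf hne hI hadj
    exact ⟨⟨_, hr.adj_iff, hr.asymm, hr.trans⟩,
      hr.twoPlusTwoFree_iff_not_hasInducedC4.1 (twoPlusTwoFree_intervalOrderOf I)⟩
  · rintro ⟨⟨r, hadj, hasymm, htrans⟩, hC4⟩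
    have hr : Gᶜ.IsTransitiveOrientation r  := ⟨hadj, hasymm, htrans⟩
    have h22 := hr.twoPlusTwoFree_iff_not_hasInducedC4.2 hC4
    refine ⟨fishburnInterval r, fun v => ⟨_, ncard_mem_fishburnInterval h22 le_rfl (hr.irrefl v)⟩,
      ordConnected_fishburnInterval, fun u v huv => ?_⟩
    rw [hr.adj_iff_not_rel, fishburnInterval_inter_nonempty_iff h22 hr.irrefl]
    exact and_iff_right huv
end
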